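/- Let p be an odd prime and let g ∈ 𝔽_p[Y] be a product of k ≥ 2 distinct monic irreducible polynomials, each of degree e. Let G = {a ∈ R_g^* : a^(p−1) = 1}, and suppose G is the internal direct sum of subgroups G₁ and G₂ of coprime orders, with #G₁ = S^k for some divisor S of p−1. Let ℱ be a subset of R_g^*, let ⟨ℱ⟩ denote the subgroup of R_g^* generated by ℱ, and let σ(ℱ) = {a^((p^e−1)/(p−1)) : a ∈ ℱ} ⊆ G. If #⟨ℱ⟩ · S^k > (p−1) · (p^e−1)^k, then the image of the subgroup ⟨σ(ℱ)⟩ of G under the projection G → G/G₂ is not cyclic. -/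

import Mathlib

/-!
By the Chinese remainder theorem `R_g` is a product of `k` fields of order `p^e`, so every unit
satisfies `a^(p^e-1) = 1` and `x^n = 1` has at most `n^k` solutions among the units.
Put `m = (p^e-1)/(p-1)`. The map `a ↦ a^m` sends `⟨ℱ⟩` onto `⟨σ(ℱ)⟩ ⊆ G` with fibres of size at
most `m^k`. If the image of `⟨σ(ℱ)⟩` in `G/G₂` is cyclic, it has exponent dividing `p-1`, hence at
most `p-1` elements, so `#⟨σ(ℱ)⟩ ≤ (p-1)·#G₂`. Finally `S^k·#G₂ = #G₁·#G₂ ≤ #G ≤ (p-1)^k`, and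
multiplying the three bounds gives `#⟨ℱ⟩·S^k ≤ (p-1)·(p^e-1)^k`.
-/


open Polynomial

/-- Instance search does not find `Subgroup.normal_of_comm` for these subgroups, whose `Group`
structure is `Units.instGroup` rather than a `CommGroup` projection. -/
instance quotUnitsSubgroupNormal (p : ℕ) (g : Polynomial (ZMod p))
    (H : Subgroup (Polynomial (ZMod p) ⧸ Ideal.span {g})ˣ) : H.Normal :=
  ⟨fun n hn g => by rwa [mul_comm g n, mul_inv_cancel_right]⟩

namespace Subgroup

variable {G G' : Type*} [Group G] [Group G']

theorem card_le_card_map_mul_card_ker (f : G →* G') (H : Subgroup G) [Finite f.ker] :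
    Nat.card H ≤ Nat.card (H.map f) * Nat.card f.ker :=
  calc Nat.card H = Nat.card (H.map f) * Nat.card ↥(f.ker ⊓ H) := by
        rw [← relIndex_bot_left, ← relIndex_mul_relIndex ⊥ (f.ker ⊓ H) H bot_le inf_le_right,
          inf_relIndex_right, relIndex_ker, relIndex_bot_left, mul_comm]
    _ ≤ Nat.card (H.map f) * Nat.card f.ker := Nat.mul_le_mul_left _ (card_le_of_le inf_le_left)

theorem card_mul_card_le_of_disjoint {A B C : Subgroup G} [Finite C] (hA : A ≤ C) (hB : B ≤ C)
    (h : Disjoint A B) : Nat.card A * Nat.card B ≤ Nat.card C := by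
  rw [← Nat.card_prod]
  refine Nat.card_le_card_of_injective (fun x => ⟨x.1 * x.2, C.mul_mem (hA x.1.2) (hB x.2.2)⟩) ?_
  exact fun x y hxy => mul_injective_of_disjoint h (congrArg Subtype.val hxy)

end Subgroup

theorem IsCyclic.card_le_of_pow_eq_one {G : Type*} [Group G] [IsCyclic G] {n : ℕ} (hn : n ≠ 0)
    (h : ∀ x : G, x ^ n = 1) : Nat.card G ≤ n :=
  IsCyclic.exponent_eq_card (α := G) ▸ Nat.le_of_dvd (Nat.pos_of_ne_zero hn)
    (Monoid.exponent_dvd_of_forall_pow_eq_one h)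

theorem card_closure_mul_card_le_of_isCyclic {Γ : Type*} [CommGroup Γ] [Finite Γ] {k n m : ℕ}
    [NeZero n] (hn : Nat.card (powMonoidHom n : Γ →* Γ).ker ≤ n ^ k)
    (hm : Nat.card (powMonoidHom m : Γ →* Γ).ker ≤ m ^ k) (hexp : ∀ x : Γ, x ^ (m * n) = 1)
    {G₁ G₂ : Subgroup Γ} (hG₁ : G₁ ≤ (powMonoidHom n).ker) (hG₂ : G₂ ≤ (powMonoidHom n).ker)
    (hdisj : Disjoint G₁ G₂) (ℱ : Set Γ)
    (hcyc : IsCyclic ((Subgroup.closure ((· ^ m) '' ℱ)).map (QuotientGroup.mk' G₂))) :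
    Nat.card (Subgroup.closure ℱ) * Nat.card G₁ ≤ n * (m * n) ^ k := by
  rw [show (· ^ m) '' ℱ = powMonoidHom m '' ℱ from rfl, ← MonoidHom.map_closure] at hcyc
  set K := (Subgroup.closure ℱ).map (powMonoidHom m)
  have hQ : Nat.card (K.map (QuotientGroup.mk' G₂)) ≤ n :=
    IsCyclic.card_le_of_pow_eq_one (NeZero.ne n) fun x => by
      obtain ⟨_, ⟨a, -, rfl⟩, hx⟩ := x.2
      ext
      rw [Subgroup.coe_pow, OneMemClass.coe_one, ← hx, ← map_pow, powMonoidHom_apply, ← pow_mul,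
        hexp, map_one]
  have hH := (Subgroup.closure ℱ).card_le_card_map_mul_card_ker (powMonoidHom m)
  have hK := K.card_le_card_map_mul_card_ker (QuotientGroup.mk' G₂)
  rw [QuotientGroup.ker_mk'] at hK
  have hG := (Subgroup.card_mul_card_le_of_disjoint hG₁ hG₂ hdisj).trans hn
  calc Nat.card (Subgroup.closure ℱ) * Nat.card G₁
      ≤ n * Nat.card G₂ * m ^ k * Nat.card G₁ := by
        gcongr
        exact hH.trans (Nat.mul_le_mul (hK.trans (Nat.mul_le_mul_right _ hQ)) hm)
    _ = n * m ^ k * (Nat.card G₁ * Nat.card G₂) := by ring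
    _ ≤ n * m ^ k * n ^ k := by gcongr
    _ = n * (m * n) ^ k := by ring

section ProductOfFields

variable {R ι : Type*} [CommRing R]

theorem card_rootsOfUnity_le_pow_of_injective_pi [Fintype ι] {D : ι → Type*}
    [∀ i, CommRing (D i)] [∀ i, IsDomain (D i)] {f : R →+* Π i, D i}
    (hf : Function.Injective f) (n : ℕ) [NeZero n] :
    Nat.card (rootsOfUnity n R) ≤ n ^ Fintype.card ι := by
  let res : rootsOfUnity n R → Π i, rootsOfUnity n (D i) := fun ζ i =>
    restrictRootsOfUnity ((Pi.evalRingHom D i).comp f) n ζ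
  have hres : Function.Injective res := fun ζ ξ h => by
    ext
    exact hf (funext fun i => Units.ext_iff.mp (Subtype.ext_iff.mp (congrFun h i)))
  calc Nat.card (rootsOfUnity n R) ≤ ∏ i, Nat.card (rootsOfUnity n (D i)) :=
        Nat.card_pi (β := fun i => rootsOfUnity n (D i)) ▸ Nat.card_le_card_of_injective res hres
    _ ≤ n ^ Fintype.card ι := Finset.prod_le_pow_card _ _ _ fun i _ => card_rootsOfUnity (D i) n

theorem Units.pow_card_sub_one_eq_one_of_injective_pi {F : ι → Type*} [∀ i, Field (F i)]
    [∀ i, Fintype (F i)] {q : ℕ} (hq : ∀ i, Fintype.card (F i) = q) {f : R →+* Π i, F i}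
    (hf : Function.Injective f) (x : Rˣ) : x ^ (q - 1) = 1 := by
  ext
  refine hf (funext fun i => ?_)
  have hx : f x i ≠ 0 := ((x.isUnit.map f).map (Pi.evalRingHom F i)).ne_zero
  simpa [hq] using FiniteField.pow_card_sub_one_eq_one (f x i) hx

end ProductOfFields

namespace Polynomial

section Monic

variable {R : Type*} [CommRing R] {q : R[X]}

theorem natCard_quotient_span_singleton_of_monic (hq : q.Monic) :
    Nat.card (R[X] ⧸ Ideal.span {q}) = Nat.card R ^ q.natDegree := by
  change Nat.card (AdjoinRoot q) = _
  rw [Nat.card_congr (AdjoinRoot.powerBasisAux' hq).equivFun.toEquiv, Nat.card_fun,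
    Nat.card_eq_fintype_card (α := Fin _), Fintype.card_fin]

theorem finite_quotient_span_singleton_of_monic [Finite R] (hq : q.Monic) :
    Finite (R[X] ⧸ Ideal.span {q}) :=
  .of_equiv _ (AdjoinRoot.powerBasisAux' hq).equivFun.toEquiv.symm

end Monic

variable {K : Type*} [Field K] {s : Finset K[X]}

theorem pairwise_isCoprime_of_monic_irreducible (hs : ∀ q ∈ s, q.Monic ∧ Irreducible q) :
    Pairwise (Function.onFun IsCoprime fun q : s => (q : K[X])) := by
  intro q r hqr
  rw [Function.onFun, (hs q q.2).2.coprime_iff_not_dvd]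
  exact fun hdvd => hqr (Subtype.ext (eq_of_monic_of_associated (hs q q.2).1 (hs r r.2).1
    ((hs q q.2).2.associated_of_dvd (hs r r.2).2 hdvd)))

noncomputable def quotientSpanProdEquivPi (s : Finset K[X])
    (hs : ∀ q ∈ s, q.Monic ∧ Irreducible q) :
    K[X] ⧸ Ideal.span {∏ q ∈ s, q} ≃+* Π q : s, K[X] ⧸ Ideal.span {(q : K[X])} :=
  (Ideal.quotEquivOfEq (by
    rw [← Finset.prod_coe_sort, ← Ideal.iInf_span_singleton
      fun _ _ h => pairwise_isCoprime_of_monic_irreducible hs h])).trans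
  (Ideal.quotientInfRingEquivPiQuotient _ fun _ _ h =>
    (Ideal.isCoprime_span_singleton_iff _ _).mpr (pairwise_isCoprime_of_monic_irreducible hs h))

theorem card_rootsOfUnity_quotient_span_prod_le (hs : ∀ q ∈ s, q.Monic ∧ Irreducible q)
    (n : ℕ) [NeZero n] :
    Nat.card (rootsOfUnity n (K[X] ⧸ Ideal.span {∏ q ∈ s, q})) ≤ n ^ s.card := by
  have : ∀ q : s, (Ideal.span {(q : K[X])}).IsMaximal := fun q =>
    PrincipalIdealRing.isMaximal_of_irreducible (hs q q.2).2
  simpa using card_rootsOfUnity_le_pow_of_injective_pi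
    (f := (quotientSpanProdEquivPi s hs).toRingHom) (quotientSpanProdEquivPi s hs).injective n

theorem units_pow_card_pow_sub_one_eq_one [Fintype K] {e : ℕ}
    (hs : ∀ q ∈ s, q.Monic ∧ Irreducible q) (hdeg : ∀ q ∈ s, q.natDegree = e)
    (x : (K[X] ⧸ Ideal.span {∏ q ∈ s, q})ˣ) : x ^ (Fintype.card K ^ e - 1) = 1 := by
  have : ∀ q : s, (Ideal.span {(q : K[X])}).IsMaximal := fun q =>
    PrincipalIdealRing.isMaximal_of_irreducible (hs q q.2).2
  let _ : ∀ q : s, Field (K[X] ⧸ Ideal.span {(q : K[X])}) := fun _ => Ideal.Quotient.field _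
  let _ : ∀ q : s, Fintype (K[X] ⧸ Ideal.span {(q : K[X])}) := fun q =>
    have := finite_quotient_span_singleton_of_monic (hs q q.2).1
    Fintype.ofFinite _
  refine Units.pow_card_sub_one_eq_one_of_injective_pi (fun q => ?_)
    (f := (quotientSpanProdEquivPi s hs).toRingHom) (quotientSpanProdEquivPi s hs).injective x
  rw [Fintype.card_eq_nat_card, natCard_quotient_span_singleton_of_monic (hs q q.2).1,
    hdeg q q.2, Nat.card_eq_fintype_card]

end Polynomial

theorem smoothness_roots_stmt12_general
    (p : ℕ) (hp : p.Prime) (k e : ℕ) (hk : 2 ≤ k)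
    (s : Finset (Polynomial (ZMod p))) (hcard : s.card = k)
    (hs : ∀ q ∈ s, q.Monic ∧ Irreducible q ∧ q.natDegree = e)
    (g : Polynomial (ZMod p)) (hg : g = ∏ q ∈ s, q)
    (G₁ G₂ : Subgroup (Polynomial (ZMod p) ⧸ Ideal.span {g})ˣ)
    (hG₁le : G₁ ≤ (@powMonoidHom (Polynomial (ZMod p) ⧸ Ideal.span {g})ˣ _ (p - 1)).ker)
    (hG₂le : G₂ ≤ (@powMonoidHom (Polynomial (ZMod p) ⧸ Ideal.span {g})ˣ _ (p - 1)).ker)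
    (hdisj : G₁ ⊓ G₂ = ⊥)
    (S : ℕ) (hG₁card : Nat.card G₁ = S ^ k)
    (ℱ : Set (Polynomial (ZMod p) ⧸ Ideal.span {g})ˣ)
    (hbig : Nat.card (Subgroup.closure ℱ) * S ^ k > (p - 1) * (p ^ e - 1) ^ k) :
    ¬ IsCyclic ((Subgroup.closure
        ((fun a : (Polynomial (ZMod p) ⧸ Ideal.span {g})ˣ =>
          a ^ ((p ^ e - 1) / (p - 1))) '' ℱ)).map (QuotientGroup.mk' G₂)) := by
  have := Fact.mk hp
  subst hg hcard
  have hmi : ∀ q ∈ s, q.Monic ∧ Irreducible q := fun q hq => ⟨(hs q hq).1, (hs q hq).2.1⟩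
  have := finite_quotient_span_singleton_of_monic
    (monic_prod_of_monic _ _ fun q hq => (hmi q hq).1)
  have hexp := units_pow_card_pow_sub_one_eq_one hmi fun q hq => (hs q hq).2.2
  rw [ZMod.card] at hexp
  have he : e ≠ 0 := by
    obtain ⟨q, hq⟩ := Finset.card_pos.mp (by omega : 0 < s.card)
    exact (hs q hq).2.2 ▸ (hs q hq).2.1.natDegree_pos.ne'
  have hm : (p ^ e - 1) / (p - 1) * (p - 1) = p ^ e - 1 :=
    Nat.div_mul_cancel (Nat.sub_one_dvd_pow_sub_one p e)
  have : NeZero (p - 1) := ⟨by have := hp.two_le; omega⟩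
  have : NeZero ((p ^ e - 1) / (p - 1)) := ⟨fun h0 => by
    rw [h0, zero_mul] at hm
    have := Nat.one_lt_pow he hp.one_lt
    omega⟩
  intro hcyc
  have := card_closure_mul_card_le_of_isCyclic (card_rootsOfUnity_quotient_span_prod_le hmi _)
    (card_rootsOfUnity_quotient_span_prod_le hmi _) (by rwa [hm]) hG₁le hG₂le
    (disjoint_iff.mpr hdisj) ℱ hcyc
  rw [hG₁card, hm] at this
  exact hbig.not_ge this

/-- Let `p` be an odd prime, `g ∈ 𝔽_p[Y]` a product of `k ≥ 2` distinct
monic irreducible polynomials, each of degree `e`.  Let `G = {a ∈ R_g^* : a^(p−1) = 1}`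
be the internal direct sum of subgroups `G₁, G₂` of coprime orders with `#G₁ = S^k`,
`S ∣ p−1`.  If `ℱ ⊆ R_g^*` satisfies `#⟨ℱ⟩·S^k > (p−1)·(p^e−1)^k`, then the image of
`⟨σ(ℱ)⟩` under the projection modulo `G₂` is not cyclic, where
`σ(a) = a^((p^e−1)/(p−1))`. -/
theorem smoothness_roots_stmt12
    (p : ℕ) (hp : p.Prime) (hodd : Odd p) (k e : ℕ) (hk : 2 ≤ k)
    (s : Finset (Polynomial (ZMod p))) (hcard : s.card = k)
    (hs : ∀ q ∈ s, q.Monic ∧ Irreducible q ∧ q.natDegree = e)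
    (g : Polynomial (ZMod p)) (hg : g = ∏ q ∈ s, q)
    (G₁ G₂ : Subgroup (Polynomial (ZMod p) ⧸ Ideal.span {g})ˣ)
    (hG₁le : G₁ ≤ (@powMonoidHom (Polynomial (ZMod p) ⧸ Ideal.span {g})ˣ _ (p - 1)).ker)
    (hG₂le : G₂ ≤ (@powMonoidHom (Polynomial (ZMod p) ⧸ Ideal.span {g})ˣ _ (p - 1)).ker)
    (hdisj : G₁ ⊓ G₂ = ⊥)
    (hsum : ∀ a ∈ (@powMonoidHom (Polynomial (ZMod p) ⧸ Ideal.span {g})ˣ _ (p - 1)).ker,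
      ∃ b ∈ G₁, ∃ c ∈ G₂, a = b * c)
    (hcop : Nat.Coprime (Nat.card G₁) (Nat.card G₂))
    (S : ℕ) (hS : S ∣ p - 1) (hG₁card : Nat.card G₁ = S ^ k)
    (ℱ : Set (Polynomial (ZMod p) ⧸ Ideal.span {g})ˣ)
    (hbig : Nat.card (Subgroup.closure ℱ) * S ^ k > (p - 1) * (p ^ e - 1) ^ k) :
    ¬ IsCyclic ((Subgroup.closure
        ((fun a : (Polynomial (ZMod p) ⧸ Ideal.span {g})ˣ =>
          a ^ ((p ^ e - 1) / (p - 1))) '' ℱ)).map (QuotientGroup.mk' G₂)) :=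
  smoothness_roots_stmt12_general p hp k e hk s hcard hs g hg G₁ G₂ hG₁le hG₂le hdisj S hG₁card ℱ
    hbig
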